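/- Batch imitation learning upper bound (equation (8)): let π* and π be two policies in a finite-horizon Markov decision process whose action space A is a bounded measurable subset of a separable real normed vector space, and suppose C : {0,…,T−1} × S → ℝ≥0 is a measurable bounded function such that for every time 0 ≤ t < T and every state s ∈ S the map a ↦ Q_{π}^t(s,a) is Lipschitz with constant at most C(t,s). Then J(π) − J(π*) ≤ Σ_{t=0}^{T−1} ∫_S C(t,s) ( ∫_A ∫_A ‖a − a*‖ π(da|s) π*(da*|s) ) d_{π*}^t(ds), where d_{π*}^t is the state marginal at time t under the expert policy π*. -/

import Mathlib

open MeasureTheory ProbabilityTheory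
open scoped NNReal ENNReal

/-! Finite-horizon MDP setup: `S` states, `A` actions, `P` transition kernel,
`c` instantaneous cost, horizon `T`; policies are Markov kernels from `S` to `A`. -/

/-- Value function of a policy `π`, defined by backward recursion:
`V^T ≡ 0` and `V^t(s) = ∫_A (c(s,a) + ∫_S V^{t+1}(s') P(ds'|s,a)) π(da|s)` for `t < T`. -/
noncomputable def mdpV {S A : Type*} [MeasurableSpace S] [MeasurableSpace A]
    (P : Kernel (S × A) S) (c : S → A → ℝ) (T : ℕ) (π : Kernel S A) :
    ℕ → S → ℝ
  | t => fun s =>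
      if _h : t < T then
        ∫ a, (c s a + ∫ s', mdpV P c T π (t + 1) s' ∂(P (s, a))) ∂(π s)
      else 0
  termination_by t => T - t
  decreasing_by omega

/-- Q-function: `Q^t(s,a) = c(s,a) + ∫_S V^{t+1}(s') P(ds'|s,a)`. -/
noncomputable def mdpQ {S A : Type*} [MeasurableSpace S] [MeasurableSpace A]
    (P : Kernel (S × A) S) (c : S → A → ℝ) (T : ℕ) (π : Kernel S A)
    (t : ℕ) (s : S) (a : A) : ℝ :=
  c s a + ∫ s', mdpV P c T π (t + 1) s' ∂(P (s, a))

/-- Total cost `J(π) = ∫_S V^0(s) μ₀(ds)`. -/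
noncomputable def mdpJ {S A : Type*} [MeasurableSpace S] [MeasurableSpace A]
    (μ₀ : Measure S) (P : Kernel (S × A) S) (c : S → A → ℝ) (T : ℕ)
    (π : Kernel S A) : ℝ :=
  ∫ s, mdpV P c T π 0 s ∂μ₀

/-- One-step state transition kernel under policy `π`:
`s ↦ ∫_A P(·|s,a) π(da|s)`. -/
noncomputable def mdpStep {S A : Type*} [MeasurableSpace S] [MeasurableSpace A]
    (P : Kernel (S × A) S) (π : Kernel S A) [IsSFiniteKernel π] : Kernel S S :=
  P ∘ₖ (Kernel.id ×ₖ π)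

/-- State marginals: `d_π^0 = μ₀` and
`d_π^{t+1}(B) = ∫_S ∫_A P(B|s,a) π(da|s) d_π^t(ds)`. -/
noncomputable def mdpD {S A : Type*} [MeasurableSpace S] [MeasurableSpace A]
    (μ₀ : Measure S) (P : Kernel (S × A) S) (π : Kernel S A)
    [IsSFiniteKernel π] : ℕ → Measure S
  | 0 => μ₀
  | t + 1 => (mdpD μ₀ P π t).bind (mdpStep P π)

section Helpers

variable {S A : Type*} [MeasurableSpace S] [MeasurableSpace A]

theorem mdpV_lt (P : Kernel (S × A) S) (c : S → A → ℝ) {T : ℕ} (π : Kernel S A)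
    {t : ℕ} (h : t < T) (s : S) :
    mdpV P c T π t s =
      ∫ a, (c s a + ∫ s', mdpV P c T π (t + 1) s' ∂(P (s, a))) ∂(π s) := by
  rw [mdpV]; exact dif_pos h

theorem mdpV_not_lt (P : Kernel (S × A) S) (c : S → A → ℝ) {T : ℕ} (π : Kernel S A)
    {t : ℕ} (h : ¬ t < T) (s : S) : mdpV P c T π t s = 0 := by
  rw [mdpV]; exact dif_neg h

theorem mdpV_eq_Q (P : Kernel (S × A) S) (c : S → A → ℝ) {T : ℕ} (π : Kernel S A)
    {t : ℕ} (h : t < T) (s : S) :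
    mdpV P c T π t s = ∫ a, mdpQ P c T π t s a ∂(π s) :=
  mdpV_lt P c π h s

theorem integrable_of_bound {X : Type*} [MeasurableSpace X] (μ : Measure X) [IsFiniteMeasure μ]
    {f : X → ℝ} (hf : AEStronglyMeasurable f μ) (K : ℝ) (h : ∀ x, |f x| ≤ K) :
    Integrable f μ :=
  (integrable_const K).mono' hf (ae_of_all _ fun x => by
    simpa [Real.norm_eq_abs] using h x)

theorem abs_integral_le_of_bound {X : Type*} [MeasurableSpace X] (μ : Measure X)
    [IsProbabilityMeasure μ] {f : X → ℝ} (K : ℝ) (h : ∀ x, |f x| ≤ K) :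
    |∫ x, f x ∂μ| ≤ K := by
  have := norm_integral_le_of_norm_le_const (μ := μ) (f := f) (C := K)
    (ae_of_all _ fun x => by simpa [Real.norm_eq_abs] using h x)
  simpa [Real.norm_eq_abs, measure_univ] using this

theorem mdpV_measurable (P : Kernel (S × A) S) [IsSFiniteKernel P] {c : S → A → ℝ}
    (hc : Measurable (Function.uncurry c)) (T : ℕ) (π : Kernel S A) [IsSFiniteKernel π] :
    ∀ t, Measurable (mdpV P c T π t) := by
  suffices h : ∀ k t, T - t ≤ k → Measurable (mdpV P c T π t) by
    exact fun t => h T t (by omega)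
  intro k
  induction k with
  | zero =>
    intro t ht
    have h' : ¬ t < T := by omega
    have : mdpV P c T π t = fun _ => (0 : ℝ) := funext fun s => mdpV_not_lt P c π h' s
    rw [this]; exact measurable_const
  | succ k ih =>
    intro t ht
    by_cases h' : t < T
    · have hV := (ih (t + 1) (by omega)).stronglyMeasurable
      have h1 : StronglyMeasurable fun p : S × A =>
          ∫ s', mdpV P c T π (t + 1) s' ∂(P p) :=
        (hV.comp_measurable measurable_snd).integral_kernel_prod_right'
      have h2 : StronglyMeasurable fun p : S × A =>
          c p.1 p.2 + ∫ s', mdpV P c T π (t + 1) s' ∂(P p) :=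
        hc.stronglyMeasurable.add h1
      have h3 := h2.integral_kernel_prod_right' (κ := π)
      have heq : mdpV P c T π t = fun s =>
          ∫ a, (c s a + ∫ s', mdpV P c T π (t + 1) s' ∂(P (s, a))) ∂(π s) :=
        funext fun s => mdpV_lt P c π h' s
      rw [heq]; exact h3.measurable
    · have : mdpV P c T π t = fun _ => (0 : ℝ) := funext fun s => mdpV_not_lt P c π h' s
      rw [this]; exact measurable_const

theorem mdpQ_measurable (P : Kernel (S × A) S) [IsSFiniteKernel P] {c : S → A → ℝ}
    (hc : Measurable (Function.uncurry c)) (T : ℕ) (π : Kernel S A) [IsSFiniteKernel π]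
    (t : ℕ) : Measurable (fun p : S × A => mdpQ P c T π t p.1 p.2) := by
  unfold mdpQ
  exact hc.add ((((mdpV_measurable P hc T π (t + 1)).stronglyMeasurable.comp_measurable
    measurable_snd).integral_kernel_prod_right' (κ := P)).measurable)

theorem mdpV_abs_le (P : Kernel (S × A) S) [IsMarkovKernel P] {c : S → A → ℝ}
    {B : ℝ} (hB : 0 ≤ B) (hc_bdd : ∀ s a, |c s a| ≤ B) (T : ℕ)
    (π : Kernel S A) [IsMarkovKernel π] :
    ∀ t s, |mdpV P c T π t s| ≤ (T : ℝ) * B := by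
  suffices h : ∀ k t, T - t ≤ k → ∀ s, |mdpV P c T π t s| ≤ ((T - t : ℕ) : ℝ) * B by
    intro t s
    refine (h T t (by omega) s).trans ?_
    have : ((T - t : ℕ) : ℝ) ≤ (T : ℝ) := by
      exact_mod_cast Nat.sub_le T t
    exact mul_le_mul_of_nonneg_right this hB
  intro k
  induction k with
  | zero =>
    intro t ht s
    have h' : ¬ t < T := by omega
    rw [mdpV_not_lt P c π h' s]
    simp only [abs_zero]
    positivity
  | succ k ih =>
    intro t ht s
    by_cases h' : t < T
    · rw [mdpV_lt P c π h' s]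
      have hsub : ((T - t : ℕ) : ℝ) * B = B + ((T - (t + 1) : ℕ) : ℝ) * B := by
        have h1 : T - t = (T - (t + 1)) + 1 := by omega
        rw [h1]; push_cast; ring
      rw [hsub]
      refine abs_integral_le_of_bound _ _ (fun a => ?_)
      refine (abs_add_le _ _).trans (add_le_add (hc_bdd s a) ?_)
      exact abs_integral_le_of_bound _ _ (fun s' => ih (t + 1) (by omega) s')
    · rw [mdpV_not_lt P c π h' s]
      simp only [abs_zero]
      positivity

theorem mdpQ_abs_le (P : Kernel (S × A) S) [IsMarkovKernel P] {c : S → A → ℝ}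
    {B : ℝ} (hB : 0 ≤ B) (hc_bdd : ∀ s a, |c s a| ≤ B) (T : ℕ)
    (π : Kernel S A) [IsMarkovKernel π] (t : ℕ) (s : S) (a : A) :
    |mdpQ P c T π t s a| ≤ B + (T : ℝ) * B := by
  unfold mdpQ
  refine (abs_add_le _ _).trans (add_le_add (hc_bdd s a) ?_)
  exact abs_integral_le_of_bound _ _ (fun s' => mdpV_abs_le P hB hc_bdd T π (t + 1) s')

theorem integral_bind_kernel {X Y : Type*} [MeasurableSpace X] [MeasurableSpace Y]
    (μ : Measure X) [IsFiniteMeasure μ] (κ : Kernel X Y) [IsMarkovKernel κ]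
    {f : Y → ℝ} (hf : Measurable f) (K : ℝ) (hb : ∀ y, |f y| ≤ K) :
    ∫ y, f y ∂(μ.bind κ) = ∫ x, ∫ y, f y ∂(κ x) ∂μ := by
  have hmap : μ.bind κ = (μ ⊗ₘ κ).map Prod.snd := by
    ext s hs
    rw [Measure.map_apply measurable_snd hs, Measure.compProd_apply (measurable_snd hs),
      Measure.bind_apply hs (Kernel.measurable κ).aemeasurable]
    rfl
  rw [hmap, integral_map measurable_snd.aemeasurable hf.aestronglyMeasurable]
  exact Measure.integral_compProd (f := fun p : X × Y => f p.2) (integrable_of_bound _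
    ((hf.comp measurable_snd).aestronglyMeasurable) K (fun p => hb p.2))

instance mdpStep_isMarkov (P : Kernel (S × A) S) [IsMarkovKernel P]
    (π : Kernel S A) [IsMarkovKernel π] : IsMarkovKernel (mdpStep P π) := by
  unfold mdpStep; infer_instance

theorem integral_mdpStep (P : Kernel (S × A) S) [IsMarkovKernel P]
    (π : Kernel S A) [IsMarkovKernel π]
    {f : S → ℝ} (hf : Measurable f) (K : ℝ) (hb : ∀ y, |f y| ≤ K) (s : S) :
    ∫ x, f x ∂(mdpStep P π s) = ∫ a, ∫ x, f x ∂(P (s, a)) ∂(π s) := by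
  have hg : StronglyMeasurable fun p : S × A => ∫ x, f x ∂(P p) :=
    (hf.stronglyMeasurable.comp_measurable measurable_snd).integral_kernel_prod_right'
  rw [show mdpStep P π s = ((Kernel.id ×ₖ π) s).bind P from rfl]
  rw [integral_bind_kernel _ P hf K hb]
  rw [Kernel.prod_apply, Kernel.id_apply, Measure.dirac_prod,
    integral_map measurable_prodMk_left.aemeasurable hg.aestronglyMeasurable]

theorem mdpD_isProb (μ₀ : Measure S) [IsProbabilityMeasure μ₀]
    (P : Kernel (S × A) S) [IsMarkovKernel P] (π : Kernel S A) [IsMarkovKernel π] :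
    ∀ t, IsProbabilityMeasure (mdpD μ₀ P π t) := by
  intro t
  induction t with
  | zero => exact ‹IsProbabilityMeasure μ₀›
  | succ t ih =>
    constructor
    rw [show mdpD μ₀ P π (t + 1) = (mdpD μ₀ P π t).bind (mdpStep P π) from rfl,
      Measure.bind_apply MeasurableSet.univ (Kernel.measurable _).aemeasurable]
    haveI := ih
    simp [measure_univ]

end Helpers

/-- **Batch imitation learning upper bound** (equation (8)): the action space is a
bounded measurable subset `Aset` of a separable real normed vector space `E`; if
`C : {0,…,T−1} × S → ℝ≥0` is measurable and bounded and every `a ↦ Q_{π}^t(s,a)` is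
Lipschitz with constant at most `C(t,s)`, then
`J(π) − J(π*) ≤ Σ_{t<T} ∫_S C(t,s) ∫_A ∫_A ‖a − a*‖ π(da|s) π*(da*|s) d_{π*}^t(ds)`. -/
theorem batch_imitation_learning_upper_bound
    {S E : Type*} [MeasurableSpace S] [StandardBorelSpace S]
    [NormedAddCommGroup E] [NormedSpace ℝ E] [TopologicalSpace.SeparableSpace E]
    [MeasurableSpace E] [BorelSpace E]
    (Aset : Set E) (hA_meas : MeasurableSet Aset) (hA_bdd : Bornology.IsBounded Aset)
    (μ₀ : Measure S) [IsProbabilityMeasure μ₀]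
    (P : Kernel (S × ↥Aset) S) [IsMarkovKernel P]
    (c : S → ↥Aset → ℝ) (hc_meas : Measurable (Function.uncurry c))
    (B : ℝ) (hc_bdd : ∀ s a, |c s a| ≤ B)
    (T : ℕ)
    (πstar π : Kernel S ↥Aset) [IsMarkovKernel πstar] [IsMarkovKernel π]
    (C : ℕ → S → ℝ≥0)
    (hC_meas : ∀ t < T, Measurable (fun s : S => C t s))
    (hC_bdd : ∃ D : ℝ≥0, ∀ t < T, ∀ s : S, C t s ≤ D)
    (hLip : ∀ t < T, ∀ s : S,
      LipschitzWith (C t s) (fun a : ↥Aset => mdpQ P c T π t s a)) :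
    mdpJ μ₀ P c T π - mdpJ μ₀ P c T πstar ≤
      ∑ t ∈ Finset.range T,
        ∫ s, (C t s : ℝ) *
            (∫ astar, ∫ a, ‖(a : E) - (astar : E)‖ ∂(π s) ∂(πstar s))
          ∂(mdpD μ₀ P πstar t) := by
  -- nonemptiness
  rcases isEmpty_or_nonempty S with hS | hS
  · have h1 : μ₀ Set.univ = 1 := measure_univ
    rw [Set.univ_eq_empty_iff.mpr hS] at h1
    simp at h1
  obtain ⟨s₀⟩ := hS
  rcases isEmpty_or_nonempty ↥Aset with hA | hA
  · have h1 : (π s₀) Set.univ = 1 := measure_univ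
    rw [Set.univ_eq_empty_iff.mpr hA] at h1
    simp at h1
  obtain ⟨a₀⟩ := hA
  have hB : 0 ≤ B := (abs_nonneg _).trans (hc_bdd s₀ a₀)
  obtain ⟨R, hR⟩ := isBounded_iff_forall_norm_le.mp hA_bdd
  have hR0 : 0 ≤ R := (norm_nonneg _).trans (hR _ a₀.2)
  obtain ⟨D, hD⟩ := hC_bdd
  haveI : SecondCountableTopology E := UniformSpace.secondCountable_of_separable E
  have habs : ∀ a b : ℝ, |a - b| ≤ |a| + |b| := fun a b => by
    rw [sub_eq_add_neg]
    exact (abs_add_le _ _).trans (le_of_eq (by rw [abs_neg]))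
  -- measurability and bounds
  have hVπm := mdpV_measurable P hc_meas T π
  have hVsm := mdpV_measurable P hc_meas T πstar
  have hQm := mdpQ_measurable P hc_meas T π
  have hQb := mdpQ_abs_le P hB hc_bdd T π
  have hVπb := mdpV_abs_le P hB hc_bdd T π
  have hVsb := mdpV_abs_le P hB hc_bdd T πstar
  have hdP : ∀ t, IsProbabilityMeasure (mdpD μ₀ P πstar t) := mdpD_isProb μ₀ P πstar
  have hnormb : ∀ (a astar : ↥Aset), ‖(a : E) - (astar : E)‖ ≤ R + R := fun a b =>
    (norm_sub_le _ _).trans (add_le_add (hR _ a.2) (hR _ b.2))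
  have hnm : Measurable fun q : (S × ↥Aset) × ↥Aset => ‖(q.2 : E) - (q.1.2 : E)‖ :=
    ((measurable_subtype_coe.comp measurable_snd).sub
      (measurable_subtype_coe.comp (measurable_snd.comp measurable_fst))).norm
  have hgSM : StronglyMeasurable fun q : S × ↥Aset => ∫ a, ‖(a : E) - (q.2 : E)‖ ∂(π q.1) := by
    have := hnm.stronglyMeasurable.integral_kernel_prod_right'
      (κ := π.comap Prod.fst measurable_fst)
    exact this
  have hWm : Measurable fun s =>
      ∫ astar, ∫ a, ‖(a : E) - (astar : E)‖ ∂(π s) ∂(πstar s) :=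
    (hgSM.integral_kernel_prod_right' (κ := πstar)).measurable
  have hWb : ∀ s, |∫ astar, ∫ a, ‖(a : E) - (astar : E)‖ ∂(π s) ∂(πstar s)| ≤ R + R := by
    intro s
    refine abs_integral_le_of_bound _ (R + R) (fun astar => ?_)
    refine abs_integral_le_of_bound _ (R + R) (fun a => ?_)
    rw [abs_of_nonneg (norm_nonneg _)]
    exact hnormb a astar
  have hQint : ∀ (t : ℕ) (s : S) (m : Measure ↥Aset) [IsFiniteMeasure m],
      Integrable (fun a => mdpQ P c T π t s a) m := by
    intro t s m _
    exact integrable_of_bound m (((hQm t).comp measurable_prodMk_left).aestronglyMeasurable)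
      (B + (T : ℝ) * B) (fun a => hQb t s a)
  have hdm : ∀ t, Measurable fun x => mdpV P c T π t x - mdpV P c T πstar t x :=
    fun t => (hVπm t).sub (hVsm t)
  have hdb : ∀ t x, |mdpV P c T π t x - mdpV P c T πstar t x| ≤ (T : ℝ) * B + (T : ℝ) * B :=
    fun t x => (habs _ _).trans (add_le_add (hVπb t x) (hVsb t x))
  have hPdm : ∀ t, Measurable fun p : S × ↥Aset =>
      ∫ x, (mdpV P c T π t x - mdpV P c T πstar t x) ∂(P p) :=
    fun t => (((hdm t).stronglyMeasurable.comp_measurable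
      measurable_snd).integral_kernel_prod_right' (κ := P)).measurable
  have hPdb : ∀ t p, |∫ x, (mdpV P c T π t x - mdpV P c T πstar t x) ∂(P p)| ≤
      (T : ℝ) * B + (T : ℝ) * B :=
    fun t p => abs_integral_le_of_bound _ _ (fun x => hdb t x)
  have hIm : ∀ (t : ℕ) (κ : Kernel S ↥Aset) [IsSFiniteKernel κ],
      Measurable fun s => ∫ a, mdpQ P c T π t s a ∂(κ s) := by
    intro t κ _
    exact ((hQm t).stronglyMeasurable.integral_kernel_prod_right' (κ := κ)).measurable
  have hΔint : ∀ t, t < T → Integrable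
      (fun s => (∫ a, mdpQ P c T π t s a ∂(π s)) - ∫ a, mdpQ P c T π t s a ∂(πstar s))
      (mdpD μ₀ P πstar t) := by
    intro t ht
    haveI := hdP t
    refine integrable_of_bound _ ((hIm t π).sub (hIm t πstar)).aestronglyMeasurable
      ((B + (T : ℝ) * B) + (B + (T : ℝ) * B)) (fun s => ?_)
    exact (habs _ _).trans (add_le_add
      (abs_integral_le_of_bound _ _ (hQb t s)) (abs_integral_le_of_bound _ _ (hQb t s)))
  have hCWint : ∀ t, t < T → Integrable
      (fun s => (C t s : ℝ) * ∫ astar, ∫ a, ‖(a : E) - (astar : E)‖ ∂(π s) ∂(πstar s))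
      (mdpD μ₀ P πstar t) := by
    intro t ht
    haveI := hdP t
    refine integrable_of_bound _
      (((measurable_coe_nnreal_real.comp (hC_meas t ht)).mul hWm).aestronglyMeasurable)
      ((D : ℝ) * (R + R)) (fun s => ?_)
    rw [abs_mul, abs_of_nonneg (C t s).coe_nonneg]
    exact mul_le_mul (by exact_mod_cast hD t ht s) (hWb s) (abs_nonneg _) D.coe_nonneg
  -- step 1: pointwise value decomposition
  have step1 : ∀ t, t < T → ∀ s : S,
      mdpV P c T π t s - mdpV P c T πstar t s =
        ((∫ a, mdpQ P c T π t s a ∂(π s)) - ∫ a, mdpQ P c T π t s a ∂(πstar s)) +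
        ∫ a, (∫ x, (mdpV P c T π (t + 1) x - mdpV P c T πstar (t + 1) x) ∂(P (s, a)))
          ∂(πstar s) := by
    intro t ht s
    have hpt : (fun a : ↥Aset => c s a + ∫ x, mdpV P c T πstar (t + 1) x ∂(P (s, a)))
        = fun a => mdpQ P c T π t s a -
            ∫ x, (mdpV P c T π (t + 1) x - mdpV P c T πstar (t + 1) x) ∂(P (s, a)) := by
      funext a
      rw [integral_sub
        (integrable_of_bound _ (hVπm (t + 1)).aestronglyMeasurable _ (hVπb (t + 1)))
        (integrable_of_bound _ (hVsm (t + 1)).aestronglyMeasurable _ (hVsb (t + 1)))]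
      simp only [mdpQ]
      ring
    have hVs_eq : mdpV P c T πstar t s =
        (∫ a, mdpQ P c T π t s a ∂(πstar s)) -
          ∫ a, (∫ x, (mdpV P c T π (t + 1) x - mdpV P c T πstar (t + 1) x) ∂(P (s, a)))
            ∂(πstar s) := by
      rw [mdpV_lt P c πstar ht s, hpt]
      exact integral_sub (hQint t s (πstar s))
        (integrable_of_bound _
          (((hPdm (t + 1)).comp measurable_prodMk_left).aestronglyMeasurable) _
          (fun a => hPdb (t + 1) (s, a)))
    rw [mdpV_eq_Q P c π ht s, hVs_eq]
    ring
  -- step 2: integrated recursion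
  have step2 : ∀ t, t < T →
      ∫ s, (mdpV P c T π t s - mdpV P c T πstar t s) ∂(mdpD μ₀ P πstar t) =
        (∫ s, ((∫ a, mdpQ P c T π t s a ∂(π s)) - ∫ a, mdpQ P c T π t s a ∂(πstar s))
          ∂(mdpD μ₀ P πstar t)) +
        ∫ x, (mdpV P c T π (t + 1) x - mdpV P c T πstar (t + 1) x)
          ∂(mdpD μ₀ P πstar (t + 1)) := by
    intro t ht
    haveI := hdP t
    have hGm : Measurable fun s =>
        ∫ a, (∫ x, (mdpV P c T π (t + 1) x - mdpV P c T πstar (t + 1) x) ∂(P (s, a)))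
          ∂(πstar s) :=
      ((hPdm (t + 1)).stronglyMeasurable.integral_kernel_prod_right' (κ := πstar)).measurable
    have hGint : Integrable (fun s =>
        ∫ a, (∫ x, (mdpV P c T π (t + 1) x - mdpV P c T πstar (t + 1) x) ∂(P (s, a)))
          ∂(πstar s)) (mdpD μ₀ P πstar t) :=
      integrable_of_bound _ hGm.aestronglyMeasurable ((T : ℝ) * B + (T : ℝ) * B)
        (fun s => abs_integral_le_of_bound _ _ (fun a => hPdb (t + 1) (s, a)))
    calc ∫ s, (mdpV P c T π t s - mdpV P c T πstar t s) ∂(mdpD μ₀ P πstar t)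
        = ∫ s, (((∫ a, mdpQ P c T π t s a ∂(π s)) - ∫ a, mdpQ P c T π t s a ∂(πstar s)) +
            ∫ a, (∫ x, (mdpV P c T π (t + 1) x - mdpV P c T πstar (t + 1) x) ∂(P (s, a)))
              ∂(πstar s)) ∂(mdpD μ₀ P πstar t) :=
          integral_congr_ae (ae_of_all _ (fun s => step1 t ht s))
      _ = (∫ s, ((∫ a, mdpQ P c T π t s a ∂(π s)) - ∫ a, mdpQ P c T π t s a ∂(πstar s))
            ∂(mdpD μ₀ P πstar t)) +
          ∫ s, (∫ a, (∫ x, (mdpV P c T π (t + 1) x - mdpV P c T πstar (t + 1) x) ∂(P (s, a)))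
            ∂(πstar s)) ∂(mdpD μ₀ P πstar t) := integral_add (hΔint t ht) hGint
      _ = _ := by
          congr 1
          rw [show mdpD μ₀ P πstar (t + 1) = (mdpD μ₀ P πstar t).bind (mdpStep P πstar) from rfl,
            integral_bind_kernel _ _ (hdm (t + 1)) ((T : ℝ) * B + (T : ℝ) * B) (hdb (t + 1))]
          exact integral_congr_ae (ae_of_all _ (fun s =>
            (integral_mdpStep P πstar (hdm (t + 1)) ((T : ℝ) * B + (T : ℝ) * B)
              (hdb (t + 1)) s).symm))
  -- step 3: pointwise Lipschitz bound
  have step3 : ∀ t, t < T → ∀ s : S,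
      (∫ a, mdpQ P c T π t s a ∂(π s)) - (∫ a, mdpQ P c T π t s a ∂(πstar s)) ≤
        (C t s : ℝ) * ∫ astar, ∫ a, ‖(a : E) - (astar : E)‖ ∂(π s) ∂(πstar s) := by
    intro t ht s
    have hQintπ := hQint t s (π s)
    have hQintπs := hQint t s (πstar s)
    have hpoint : ∀ astar a : ↥Aset, mdpQ P c T π t s a - mdpQ P c T π t s astar ≤
        (C t s : ℝ) * ‖(a : E) - (astar : E)‖ := by
      intro astar a
      refine (le_abs_self _).trans ?_
      have h := (hLip t ht s).dist_le_mul a astar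
      rw [Real.dist_eq] at h
      refine h.trans ?_
      rw [Subtype.dist_eq, dist_eq_norm]
    have hnint : ∀ astar : ↥Aset,
        Integrable (fun a : ↥Aset => ‖(a : E) - (astar : E)‖) (π s) := fun astar =>
      integrable_of_bound _ ((measurable_subtype_coe.sub measurable_const).norm).aestronglyMeasurable
        (R + R) (fun a => by rw [abs_of_nonneg (norm_nonneg _)]; exact hnormb a astar)
    have e1 : ∀ astar : ↥Aset,
        (∫ a, mdpQ P c T π t s a ∂(π s)) - mdpQ P c T π t s astar ≤
          (C t s : ℝ) * ∫ a, ‖(a : E) - (astar : E)‖ ∂(π s) := by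
      intro astar
      rw [← integral_const_mul]
      have heq : (∫ a, mdpQ P c T π t s a ∂(π s)) - mdpQ P c T π t s astar =
          ∫ a, (mdpQ P c T π t s a - mdpQ P c T π t s astar) ∂(π s) := by
        rw [integral_sub hQintπ (integrable_const _), integral_const]
        simp [measure_univ]
      rw [heq]
      exact integral_mono (hQintπ.sub (integrable_const _)) ((hnint astar).const_mul _)
        (fun a => hpoint astar a)
    have e2 : (∫ a, mdpQ P c T π t s a ∂(π s)) - (∫ a, mdpQ P c T π t s a ∂(πstar s)) =
        ∫ astar, ((∫ a, mdpQ P c T π t s a ∂(π s)) - mdpQ P c T π t s astar) ∂(πstar s) := by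
      rw [integral_sub (integrable_const _) hQintπs, integral_const]
      simp [measure_univ]
    rw [e2, ← integral_const_mul]
    refine integral_mono ((integrable_const _).sub hQintπs) ?_ e1
    refine integrable_of_bound _
      (((hgSM.comp_measurable measurable_prodMk_left).measurable).const_mul _).aestronglyMeasurable
      ((C t s : ℝ) * (R + R)) (fun astar => ?_)
    rw [abs_mul, abs_of_nonneg (C t s).coe_nonneg]
    refine mul_le_mul_of_nonneg_left ?_ (C t s).coe_nonneg
    refine abs_integral_le_of_bound _ (R + R) (fun a => ?_)
    rw [abs_of_nonneg (norm_nonneg _)]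
    exact hnormb a astar
  -- telescoping
  have key : ∀ k, k ≤ T →
      ∫ s, (mdpV P c T π (T - k) s - mdpV P c T πstar (T - k) s) ∂(mdpD μ₀ P πstar (T - k)) ≤
        ∑ t ∈ Finset.Ico (T - k) T,
          ∫ s, (C t s : ℝ) * (∫ astar, ∫ a, ‖(a : E) - (astar : E)‖ ∂(π s) ∂(πstar s))
            ∂(mdpD μ₀ P πstar t) := by
    intro k
    induction k with
    | zero =>
      intro _
      rw [Nat.sub_zero, Finset.Ico_self, Finset.sum_empty]
      simp [mdpV_not_lt P c π (lt_irrefl T), mdpV_not_lt P c πstar (lt_irrefl T)]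
    | succ k ih =>
      intro hk
      have ht : T - (k + 1) < T := by omega
      have hsucc : T - (k + 1) + 1 = T - k := by omega
      haveI := hdP (T - (k + 1))
      rw [step2 (T - (k + 1)) ht, hsucc]
      have h1 := integral_mono (hΔint _ ht) (hCWint _ ht) (step3 _ ht)
      have h2 := ih (by omega)
      refine (add_le_add h1 h2).trans (le_of_eq ?_)
      rw [Finset.sum_eq_sum_Ico_succ_bot ht, hsucc]
  have hfin := key T le_rfl
  rw [Nat.sub_self] at hfin
  rw [show mdpD μ₀ P πstar 0 = μ₀ from rfl] at hfin
  rw [mdpJ, mdpJ, ← integral_sub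
    (integrable_of_bound _ (hVπm 0).aestronglyMeasurable ((T : ℝ) * B) (hVπb 0))
    (integrable_of_bound _ (hVsm 0).aestronglyMeasurable ((T : ℝ) * B) (hVsb 0))]
  rw [Finset.range_eq_Ico]
  exact hfin
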